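/- Let G1 be a connected δ1-regular graph and G2 be a connected δ2-regular graph on δ1 vertices. If κ(G1) = λ(G1) and G2 is λ'-optimal, then λ'(G1®G2) = min{λ(G1), 2δ2}. -/

import Mathlib

/-!
Write `G = G1 ® G2`; every vertex `(x, i)` has its `δ2` neighbours of `G2` inside the cloud
`{x} × V2` and exactly one neighbour outside it. Lifting an edge-cut `∂X` of `G1` to
`∂(X × V2)`, and removing the `2 δ2` edges leaving a cloud edge, give restricted edge-cuts of
the two sizes in the minimum.

Conversely let `F` be a restricted edge-cut with `|F| < min (λ(G1), 2 δ2)` and `B` the set of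
edges of `G1` under the cross edges of `F`. If no cloud is disconnected by `F`, then `G - F` is
connected because `G1 - B` is. Otherwise, by `λ'`-optimality of `G2`, a broken cloud `x₀` uses
at least `δ2` edges of `F`; so all other clouds are intact and `|B| + 1 < λ(G1) = κ(G1)`, which
keeps `G1 - B - x₀` connected. Finally a component of `G - F` inside the cloud `x₀` would have
at least `2 δ2` boundary edges, all in `F`, so every vertex of that cloud reaches the rest.
-/

open SimpleGraph

section Defs

variable {V : Type*}

/-- The set of edges of `G` with one endpoint in `X` and the other outside `X`. -/
def edgeBoundary (G : SimpleGraph V) (X : Set V) : Set (Sym2 V) :=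
  {e | e ∈ G.edgeSet ∧ ∃ u ∈ X, ∃ v ∈ Xᶜ, e = s(u, v)}

/-- The edge-connectivity `λ(G)`: the minimum number of edges whose removal disconnects `G`. -/
noncomputable def edgeConn (G : SimpleGraph V) : ℕ :=
  sInf {k | ∃ F : Set (Sym2 V), F ⊆ G.edgeSet ∧ F.ncard = k ∧ ¬(G.deleteEdges F).Connected}

/-- `F` is a restricted edge-cut of `G`: removing `F` disconnects `G` and leaves no
isolated vertices. -/
def IsRestrictedEdgeCut (G : SimpleGraph V) (F : Set (Sym2 V)) : Prop :=
  F ⊆ G.edgeSet ∧ ¬(G.deleteEdges F).Connected ∧ ∀ v : V, ∃ w : V, (G.deleteEdges F).Adj v w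

/-- The restricted edge-connectivity `λ'(G)`. -/
noncomputable def restrictedEdgeConn (G : SimpleGraph V) : ℕ :=
  sInf {k | ∃ F : Set (Sym2 V), IsRestrictedEdgeCut G F ∧ F.ncard = k}

/-- The vertex-connectivity `κ(G)`: the minimum size of a set of vertices whose removal
leaves a disconnected graph or a graph with at most one vertex. -/
noncomputable def vertexConn (G : SimpleGraph V) : ℕ :=
  sInf {k | ∃ S : Set V, S.ncard = k ∧
    (¬(G.induce (Sᶜ : Set V)).Connected ∨ (Sᶜ : Set V).ncard ≤ 1)}

/-- The minimum edge-degree `ξ(G) = min {d(u) + d(v) - 2 : uv ∈ E(G)}`. -/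
noncomputable def minEdgeDegree (G : SimpleGraph V) : ℕ :=
  sInf {k | ∃ u v : V, G.Adj u v ∧ (G.neighborSet u).ncard + (G.neighborSet v).ncard - 2 = k}

/-- `G` is `λ'`-optimal if `λ'(G) = ξ(G)`. -/
def LambdaPrimeOptimal (G : SimpleGraph V) : Prop :=
  restrictedEdgeConn G = minEdgeDegree G

/-- The replacement product of `G1` and `G2` with respect to an edge-labelling `ℓ`,
where `ℓ x i` is the other endpoint of the edge of `G1` labelled `i` at the vertex `x`.
Vertices `(x, i)` and `(y, j)` are adjacent iff either `x = y` and `i j ∈ E(G2)`, or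
`x y ∈ E(G1)` and the edge `x y` is labelled `i` at `x` and `j` at `y`. -/
def replacementProduct {V1 V2 : Type*} (G1 : SimpleGraph V1) (G2 : SimpleGraph V2)
    (ℓ : V1 → V2 → V1) : SimpleGraph (V1 × V2) where
  Adj p q := (p.1 = q.1 ∧ G2.Adj p.2 q.2) ∨
    (G1.Adj p.1 q.1 ∧ ℓ p.1 p.2 = q.1 ∧ ℓ q.1 q.2 = p.1)
  symm := by
    constructor
    rintro p q (⟨h1, h2⟩ | ⟨h1, h2, h3⟩)
    · exact Or.inl ⟨h1.symm, h2.symm⟩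
    · exact Or.inr ⟨h1.symm, h3, h2⟩
  loopless := by
    constructor
    rintro p (⟨_, h⟩ | ⟨h, _⟩)
    · exact G2.loopless.irrefl _ h
    · exact G1.loopless.irrefl _ h

/-- `ℓ` is a valid edge-labelling of `G1` for the replacement product:
for each vertex `x`, `ℓ x` is injective and `ℓ x i` is always a neighbour of `x`
(hence `ℓ x` enumerates the neighbours of `x` when `G1` is `|V2|`-regular). -/
def IsRPLabelling {V1 V2 : Type*} (G1 : SimpleGraph V1) (ℓ : V1 → V2 → V1) : Prop :=
  (∀ x, Function.Injective (ℓ x)) ∧ ∀ x i, G1.Adj x (ℓ x i)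

end Defs

namespace SimpleGraph

variable {V : Type*} {G : SimpleGraph V}

theorem Reachable.lift {W : Type*} {H : SimpleGraph W} (f : V → W)
    (hf : ∀ ⦃a b⦄, G.Adj a b → H.Reachable (f a) (f b)) {a b : V} (h : G.Reachable a b) :
    H.Reachable (f a) (f b) := by
  rw [reachable_iff_reflTransGen] at h ⊢
  exact Relation.ReflTransGen.lift' f
    (fun a b hab => (reachable_iff_reflTransGen _ _).1 (hf hab)) a b h

theorem ncard_neighborSet_lt_nat_card [Finite V] (v : V) :
    (G.neighborSet v).ncard < Nat.card V := by
  rw [← Set.ncard_univ]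
  refine Set.ncard_lt_ncard (Set.ssubset_univ_iff.2 fun h => G.loopless.irrefl v ?_)
  exact (h.symm ▸ Set.mem_univ v : v ∈ G.neighborSet v)

theorem not_connected_of_forall_adj_mem {X : Set V} (hX : ∀ a ∈ X, ∀ b, G.Adj a b → b ∈ X)
    {u v : V} (hu : u ∈ X) (hv : v ∉ X) : ¬G.Connected := by
  intro hG
  obtain ⟨p⟩ := hG.preconnected u v
  induction p with
  | nil => exact hv hu
  | cons h _ ih => exact ih (hX _ hu _ h) hv

theorem deleteEdges_edgeBoundary_adj {X : Set V} {a b : V} :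
    (G.deleteEdges (edgeBoundary G X)).Adj a b ↔ G.Adj a b ∧ (a ∈ X ↔ b ∈ X) := by
  simp only [deleteEdges_adj, edgeBoundary, Set.mem_ofPred_eq, mem_edgeSet, Set.mem_compl_iff,
    Sym2.eq_iff, and_congr_right_iff]
  intro hab
  constructor
  · intro h
    by_contra hX
    refine h ⟨hab, ?_⟩
    by_cases ha : a ∈ X
    · exact ⟨a, ha, b, fun hb => hX (iff_of_true ha hb), Or.inl ⟨rfl, rfl⟩⟩
    · exact ⟨b, by tauto, a, ha, Or.inr ⟨rfl, rfl⟩⟩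
  · rintro hX ⟨-, u, hu, v, hv, (⟨rfl, rfl⟩ | ⟨rfl, rfl⟩)⟩ <;> tauto

theorem isRestrictedEdgeCut_edgeBoundary {X : Set V} {u v : V} (hu : u ∈ X) (hv : v ∉ X)
    (hX : ∀ a, ∃ b, G.Adj a b ∧ (a ∈ X ↔ b ∈ X)) :
    IsRestrictedEdgeCut G (edgeBoundary G X) := by
  refine ⟨fun e he => he.1, not_connected_of_forall_adj_mem ?_ hu hv, ?_⟩
  · intro a ha b hab
    exact (deleteEdges_edgeBoundary_adj.1 hab).2.1 ha
  · intro a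
    obtain ⟨b, hab⟩ := hX a
    exact ⟨b, deleteEdges_edgeBoundary_adj.2 hab⟩

theorem edgeBoundary_setOf_reachable_subset (F : Set (Sym2 V)) (u : V) :
    edgeBoundary G {v | (G.deleteEdges F).Reachable u v} ⊆ F := by
  rintro _ ⟨he, a, ha, b, hb, rfl⟩
  by_contra hF
  exact hb (ha.trans (Adj.reachable (deleteEdges_adj.2 ⟨he, hF⟩)))

theorem ncard_mul_le_ncard_edgeBoundary [Finite V] {X : Set V} {d : ℕ}
    (hd : ∀ v ∈ X, d ≤ (G.neighborSet v).ncard) :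
    X.ncard * (d + 1 - X.ncard) ≤ (edgeBoundary G X).ncard := by
  classical
  have := Fintype.ofFinite V
  have hout : ∀ v ∈ X, d + 1 - X.ncard ≤ (G.neighborSet v \ X).ncard := by
    intro v hv
    have hsub : G.neighborSet v ⊆ (G.neighborSet v \ X) ∪ (X \ {v}) := fun w hw => by
      by_cases hwX : w ∈ X
      · exact Or.inr ⟨hwX, (G.ne_of_adj hw).symm⟩
      · exact Or.inl ⟨hw, hwX⟩
    have := (Set.ncard_le_ncard hsub).trans (Set.ncard_union_le _ _)
    have := Set.ncard_sdiff_singleton_of_mem hv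
    have := hd v hv
    have := (Set.ncard_pos (Set.toFinite _)).2 ⟨v, hv⟩
    omega
  calc X.ncard * (d + 1 - X.ncard)
      = X.toFinset.card • (d + 1 - X.ncard) := by rw [Set.ncard_eq_toFinset_card', smul_eq_mul]
    _ ≤ ∑ v ∈ X.toFinset, (G.neighborSet v \ X).toFinset.card :=
        Finset.card_nsmul_le_sum _ _ _ fun v hv => by
          rw [← Set.ncard_eq_toFinset_card']; exact hout v (Set.mem_toFinset.1 hv)
    _ = (X.toFinset.sigma fun v => (G.neighborSet v \ X).toFinset).card :=
        (Finset.card_sigma _ _).symm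
    _ ≤ (edgeBoundary G X).toFinset.card := by
        refine Finset.card_le_card_of_injOn (fun p => s(p.1, p.2)) ?_ ?_
        · rintro ⟨v, w⟩ h
          simp only [Finset.coe_sigma, Set.mem_sigma_iff, Finset.mem_coe, Set.mem_toFinset,
            Set.mem_sdiff, mem_neighborSet] at h
          simp only [Set.coe_toFinset]
          exact ⟨h.2.1, v, h.1, w, h.2.2, rfl⟩
        · rintro ⟨v, w⟩ h ⟨v', w'⟩ h' heq
          simp only [Finset.coe_sigma, Set.mem_sigma_iff, Finset.mem_coe, Set.mem_toFinset,
            Set.mem_sdiff, mem_neighborSet] at h h'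
          rcases Sym2.eq_iff.1 heq with ⟨rfl, rfl⟩ | ⟨rfl, -⟩
          · rfl
          · exact absurd h.1 h'.2.2
    _ = (edgeBoundary G X).ncard := (Set.ncard_eq_toFinset_card' _).symm

theorem ncard_edgeBoundary_pair_add_two_le [Finite V] {u v : V} (huv : G.Adj u v) :
    (edgeBoundary G {u, v}).ncard + 2 ≤ (G.neighborSet u).ncard + (G.neighborSet v).ncard := by
  have hsub : edgeBoundary G {u, v} ⊆
      (fun w => s(u, w)) '' (G.neighborSet u \ {v}) ∪
        (fun w => s(v, w)) '' (G.neighborSet v \ {u}) := by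
    rintro _ ⟨he, a, ha, b, hb, rfl⟩
    simp only [Set.mem_compl_iff, Set.mem_insert_iff, Set.mem_singleton_iff, not_or] at ha hb
    rcases ha with rfl | rfl
    · exact Or.inl ⟨b, ⟨he, hb.2⟩, rfl⟩
    · exact Or.inr ⟨b, ⟨he, hb.1⟩, rfl⟩
  have := (Set.ncard_le_ncard hsub).trans (Set.ncard_union_le _ _)
  have := Set.ncard_image_le (f := fun w => s(u, w)) (s := G.neighborSet u \ {v}) (Set.toFinite _)
  have := Set.ncard_image_le (f := fun w => s(v, w)) (s := G.neighborSet v \ {u}) (Set.toFinite _)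
  have := Set.ncard_sdiff_singleton_of_mem (show v ∈ G.neighborSet u from huv)
  have := Set.ncard_sdiff_singleton_of_mem (show u ∈ G.neighborSet v from huv.symm)
  have := (Set.ncard_pos (Set.toFinite _)).2 ⟨v, (show v ∈ G.neighborSet u from huv)⟩
  have := (Set.ncard_pos (Set.toFinite _)).2 ⟨u, (show u ∈ G.neighborSet v from huv.symm)⟩
  omega

end SimpleGraph

section Connectivity

variable {V : Type*} {G : SimpleGraph V}

theorem vertexConn_le_ncard {S : Set V} (h : ¬(G.induce Sᶜ).Connected) :
    vertexConn G ≤ S.ncard :=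
  Nat.sInf_le ⟨S, rfl, Or.inl h⟩

theorem edgeConn_le_ncard {F : Set (Sym2 V)} (hF : F ⊆ G.edgeSet)
    (h : ¬(G.deleteEdges F).Connected) : edgeConn G ≤ F.ncard :=
  Nat.sInf_le ⟨F, hF, rfl, h⟩

theorem restrictedEdgeConn_le_ncard {F : Set (Sym2 V)} (h : IsRestrictedEdgeCut G F) :
    restrictedEdgeConn G ≤ F.ncard :=
  Nat.sInf_le ⟨F, h, rfl⟩

theorem exists_ncard_edgeBoundary_le_edgeConn [Finite V] [Nontrivial V] :
    ∃ X : Set V, (∃ a ∈ X, ∃ b, b ∉ X) ∧ (edgeBoundary G X).ncard ≤ edgeConn G := by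
  obtain ⟨u, v, huv⟩ := exists_pair_ne V
  have hdis : ¬(G.deleteEdges G.edgeSet).Connected := by
    refine not_connected_of_forall_adj_mem (X := {u}) ?_ rfl huv.symm
    intro a _ b hab
    exact absurd (deleteEdges_adj.1 hab).1 (deleteEdges_adj.1 hab).2
  have hne : {k | ∃ F : Set (Sym2 V), F ⊆ G.edgeSet ∧ F.ncard = k ∧
      ¬(G.deleteEdges F).Connected}.Nonempty := ⟨_, G.edgeSet, subset_rfl, rfl, hdis⟩
  obtain ⟨F, hFE, hF, hF_two_mulis⟩ := Nat.sInf_mem hne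
  obtain ⟨a, b, hab⟩ : ∃ a b, ¬(G.deleteEdges F).Reachable a b := by
    by_contra! h
    exact hF_two_mulis ((connected_iff _).2 ⟨h, ⟨u⟩⟩)
  refine ⟨{w | (G.deleteEdges F).Reachable a w}, ⟨a, Reachable.refl a, b, hab⟩, ?_⟩
  exact (Set.ncard_le_ncard (edgeBoundary_setOf_reachable_subset F a)).trans hF.le

theorem ncard_mul_ncard_le_of_forall_mem [Finite V] {A A' : Set V} {B : Set (Sym2 V)}
    (hAA' : Disjoint A A') (hB : ∀ a ∈ A, ∀ b ∈ A', s(a, b) ∈ B) :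
    A.ncard * A'.ncard ≤ B.ncard := by
  rw [← Set.ncard_prod]
  refine Set.ncard_le_ncard_of_injOn (fun p => s(p.1, p.2)) (fun p hp => hB _ hp.1 _ hp.2) ?_
  rintro ⟨a, b⟩ ⟨ha, -⟩ ⟨a', b'⟩ ⟨-, hb'⟩ heq
  rcases Sym2.eq_iff.1 heq with ⟨rfl, rfl⟩ | ⟨rfl, -⟩
  · rfl
  · exact absurd hb' (Set.disjoint_left.1 hAA' ha)

/-- One endpoint other than `a` and `b` of each edge of `B`, together with `S`, separates `a`
from `b`. -/
theorem vertexConn_le_ncard_add_ncard [Finite V] {S A : Set V} {B : Set (Sym2 V)} {a b : V}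
    (ha : a ∈ A) (haS : a ∉ S) (hb : b ∉ A) (hbS : b ∉ S) (hab : s(a, b) ∉ B)
    (hA : ∀ p ∈ A, ∀ q ∉ S, q ∉ A → G.Adj p q → s(p, q) ∈ B) :
    vertexConn G ≤ S.ncard + B.ncard := by
  have hend : ∀ e ∈ B ∩ G.edgeSet, ∃ w ∈ e, w ≠ a ∧ w ≠ b := by
    rintro e ⟨heB, heE⟩
    induction e using Sym2.ind with
    | _ p q =>
      by_contra! h
      have hp := h p (Sym2.mem_mk_left p q)
      have hq := h q (Sym2.mem_mk_right p q)
      have hpq : p ≠ q := G.ne_of_adj heE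
      by_cases hpa : p = a
      · subst hpa
        obtain rfl := hq (Ne.symm hpq)
        exact hab heB
      · obtain rfl := hp hpa
        obtain rfl : q = a := by by_contra hqa; exact hpq (hq hqa).symm
        exact hab (Sym2.eq_swap ▸ heB)
  have : Nonempty V := ⟨a⟩
  choose! f hf using hend
  set T := f '' (B ∩ G.edgeSet)
  have hT : T.ncard ≤ B.ncard :=
    (Set.ncard_image_le (Set.toFinite _)).trans (Set.ncard_le_ncard Set.inter_subset_left)
  have haT : a ∉ T := fun ⟨e, he, hfe⟩ => (hf e he).2.1 hfe
  have hbT : b ∉ T := fun ⟨e, he, hfe⟩ => (hf e he).2.2 hfe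
  have hsep : ¬(G.induce (S ∪ T)ᶜ).Connected := by
    refine not_connected_of_forall_adj_mem (X := {w | (w : V) ∈ A}) ?_
      (u := ⟨a, fun h => h.elim haS haT⟩) (v := ⟨b, fun h => h.elim hbS hbT⟩) ha hb
    rintro ⟨p, hp⟩ hpA ⟨q, hq⟩ hpq
    by_contra hqA
    simp only [Set.mem_compl_iff, Set.mem_union, not_or] at hp hq
    have hpqE : s(p, q) ∈ B ∩ G.edgeSet := ⟨hA p hpA q hq.1 hqA hpq, hpq⟩
    rcases Sym2.mem_iff.1 (hf _ hpqE).1 with h | h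
    · exact hp.2 ⟨_, hpqE, h⟩
    · exact hq.2 ⟨_, hpqE, h⟩
  calc vertexConn G ≤ (S ∪ T).ncard := vertexConn_le_ncard hsep
    _ ≤ S.ncard + T.ncard := Set.ncard_union_le _ _
    _ ≤ S.ncard + B.ncard := by omega

theorem connected_induce_compl_deleteEdges [Finite V] {S : Set V} {B : Set (Sym2 V)}
    (hS : Sᶜ.Nonempty) (hκ : S.ncard + B.ncard < vertexConn G)
    (hdeg : ∀ v, S.ncard + B.ncard < (G.neighborSet v).ncard) :
    ((G.deleteEdges B).induce Sᶜ).Connected := by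
  have : Nonempty (Sᶜ : Set V) := hS.to_subtype
  refine (connected_iff _).2 ⟨fun u v => ?_, inferInstance⟩
  by_contra huv
  set A : Set V := {w | ∃ hw : w ∉ S, ((G.deleteEdges B).induce Sᶜ).Reachable u ⟨w, hw⟩}
  have huA : (u : V) ∈ A := ⟨u.2, .refl _⟩
  have hvA : (v : V) ∉ A := fun ⟨_, h⟩ => huv h
  have hA : ∀ p ∈ A, ∀ q ∉ S, q ∉ A → G.Adj p q → s(p, q) ∈ B := by
    rintro p ⟨hpS, hp⟩ q hqS hqA hpq
    by_contra hB
    exact hqA ⟨hqS, hp.trans (Adj.reachable (by simpa [deleteEdges_adj] using ⟨hpq, hB⟩))⟩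
  by_cases hall : ∀ p ∈ A, ∀ q ∉ S, q ∉ A → s(p, q) ∈ B
  · set A' := Sᶜ \ A
    have hprod : A.ncard * A'.ncard ≤ B.ncard :=
      ncard_mul_ncard_le_of_forall_mem Set.disjoint_sdiff_right
        fun p hp q hq => hall p hp q hq.1 hq.2
    have hsub : G.neighborSet u ⊆ (A \ {(u : V)}) ∪ A' ∪ S := fun w hw => by
      by_cases hwS : w ∈ S
      · exact Or.inr hwS
      by_cases hwA : w ∈ A
      · exact Or.inl (Or.inl ⟨hwA, (G.ne_of_adj hw).symm⟩)
      · exact Or.inl (Or.inr ⟨hwS, hwA⟩)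
    have hdeg_u : (G.neighborSet u).ncard + 1 ≤ A.ncard + A'.ncard + S.ncard := by
      have := Set.ncard_le_ncard hsub
      have := Set.ncard_union_le (A \ {(u : V)} ∪ A') S
      have := Set.ncard_union_le (A \ {(u : V)}) A'
      have := Set.ncard_sdiff_singleton_of_mem huA
      have := (Set.ncard_pos (Set.toFinite _)).2 ⟨_, huA⟩
      omega
    have hA1 : 1 ≤ A.ncard := (Set.ncard_pos (Set.toFinite _)).2 ⟨_, huA⟩
    have hA'1 : 1 ≤ A'.ncard := (Set.ncard_pos (Set.toFinite _)).2 ⟨v, v.2, hvA⟩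
    have := hdeg u
    -- `|B| + 1 < |A| + |A'| ≤ |A| |A'| + 1`
    nlinarith
  · push Not at hall
    obtain ⟨a, ha, b, hbS, hbA, hab⟩ := hall
    have := vertexConn_le_ncard_add_ncard ha ha.1 hbA hbS hab hA
    omega

theorem minEdgeDegree_eq_of_forall_ncard_neighborSet_eq {d : ℕ}
    (hreg : ∀ v, (G.neighborSet v).ncard = d) {u v : V} (huv : G.Adj u v) :
    minEdgeDegree G = 2 * d - 2 := by
  have key : ∀ k ∈ {k | ∃ u v : V, G.Adj u v ∧
      (G.neighborSet u).ncard + (G.neighborSet v).ncard - 2 = k}, k = 2 * d - 2 := by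
    rintro k ⟨a, b, -, rfl⟩
    rw [hreg, hreg]
    omega
  exact key _ (Nat.sInf_mem ⟨_, u, v, huv, rfl⟩)

/-- Either `F` isolates a vertex, or it is a restricted edge-cut of size at least `2d - 2`. -/
theorem le_ncard_of_not_connected_deleteEdges [Finite V] {d : ℕ} (hG : G.Connected)
    (hreg : ∀ v, (G.neighborSet v).ncard = d) (hopt : LambdaPrimeOptimal G)
    {F : Set (Sym2 V)} (hF : F ⊆ G.edgeSet) (hdis : ¬(G.deleteEdges F).Connected) :
    d ≤ F.ncard := by
  by_cases hiso : ∃ v, ∀ w, ¬(G.deleteEdges F).Adj v w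
  · obtain ⟨v, hv⟩ := hiso
    have hsub : edgeBoundary G {v} ⊆ F := by
      rintro _ ⟨he, a, rfl, b, -, rfl⟩
      by_contra hb
      exact hv b (deleteEdges_adj.2 ⟨he, hb⟩)
    have := ncard_mul_le_ncard_edgeBoundary (G := G) (X := {v}) (d := d) (by simp [hreg])
    rw [Set.ncard_singleton] at this
    have := Set.ncard_le_ncard hsub
    omega
  · push Not at hiso
    obtain ⟨e, he⟩ : F.Nonempty :=
      Set.nonempty_iff_ne_empty.2 fun h => hdis (by rwa [h, deleteEdges_empty])
    have hpos := (Set.ncard_pos (Set.toFinite _)).2 ⟨e, he⟩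
    have hcut := restrictedEdgeConn_le_ncard ⟨hF, hdis, hiso⟩
    induction e using Sym2.ind with
    | _ u v =>
      rw [hopt, minEdgeDegree_eq_of_forall_ncard_neighborSet_eq hreg (hF he)] at hcut
      omega

theorem restrictedEdgeConn_eq_zero_of_ncard_neighborSet_le_one [Finite V] (hG : G.Connected)
    (hdeg : ∀ v, (G.neighborSet v).ncard ≤ 1) : restrictedEdgeConn G = 0 := by
  refine Nat.sInf_eq_zero.2 (Or.inr (Set.eq_empty_of_forall_notMem ?_))
  rintro _ ⟨F, ⟨hFE, hdis, hiso⟩, -⟩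
  have hF : F = ∅ := by
    refine Set.eq_empty_of_forall_notMem fun e he => ?_
    induction e using Sym2.ind with
    | _ a b =>
      obtain ⟨w, hw⟩ := hiso a
      rw [deleteEdges_adj] at hw
      obtain rfl : w = b := (Set.ncard_le_one (Set.toFinite _)).1 (hdeg a) w hw.1 b (hFE he)
      exact hw.2 he
  exact hdis (by rwa [hF, deleteEdges_empty])

end Connectivity

section ReplacementProduct

variable {V1 V2 : Type*}

def cloudCut (F : Set (Sym2 (V1 × V2))) (x : V1) : Set (Sym2 V2) :=
  Sym2.map (Prod.mk x) ⁻¹' F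

/-- Cloud edges of `F` project to diagonals, which the intersection with `G1.edgeSet` discards. -/
def baseCut (G1 : SimpleGraph V1) (F : Set (Sym2 (V1 × V2))) : Set (Sym2 V1) :=
  G1.edgeSet ∩ Sym2.map Prod.fst '' F

variable {G1 : SimpleGraph V1} {G2 : SimpleGraph V2} {ℓ : V1 → V2 → V1}

theorem IsRPLabelling.nat_card_le_ncard_neighborSet [Finite V1] (hℓ : IsRPLabelling G1 ℓ)
    (x : V1) : Nat.card V2 ≤ (G1.neighborSet x).ncard := by
  rw [← Set.ncard_range_of_injective (hℓ.1 x)]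
  exact Set.ncard_le_ncard (Set.range_subset_iff.2 (hℓ.2 x))

theorem IsRPLabelling.exists_eq_of_adj [Finite V1] [Fintype V2] {δ1 : ℕ}
    (hℓ : IsRPLabelling G1 ℓ) (hr1 : ∀ x, (G1.neighborSet x).ncard = δ1)
    (hd : Fintype.card V2 = δ1) {x y : V1} (hxy : G1.Adj x y) : ∃ i, ℓ x i = y := by
  have hrange : Set.range (ℓ x) = G1.neighborSet x := by
    refine Set.eq_of_subset_of_ncard_le (Set.range_subset_iff.2 (hℓ.2 x)) ?_
    rw [Set.ncard_range_of_injective (hℓ.1 x), Nat.card_eq_fintype_card, hd, hr1]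
  exact (hrange ▸ hxy : y ∈ Set.range (ℓ x))

theorem replacementProduct_adj_of_fst_ne {p q : V1 × V2}
    (h : (replacementProduct G1 G2 ℓ).Adj p q) (hne : p.1 ≠ q.1) :
    G1.Adj p.1 q.1 ∧ ℓ p.1 p.2 = q.1 ∧ ℓ q.1 q.2 = p.1 :=
  h.resolve_left fun h' => hne h'.1

theorem exists_replacementProduct_adj_label (hℓ : IsRPLabelling G1 ℓ)
    (hsurj : ∀ x y, G1.Adj x y → ∃ i, ℓ x i = y) (x : V1) (i : V2) :
    ∃ j, (replacementProduct G1 G2 ℓ).Adj (x, i) (ℓ x i, j) := by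
  obtain ⟨j, hj⟩ := hsurj _ _ (hℓ.2 x i).symm
  exact ⟨j, Or.inr ⟨hℓ.2 x i, rfl, hj⟩⟩

theorem ncard_neighborSet_replacementProduct [Finite V2] (hℓ : IsRPLabelling G1 ℓ)
    (hsurj : ∀ x y, G1.Adj x y → ∃ i, ℓ x i = y) (x : V1) (i : V2) :
    ((replacementProduct G1 G2 ℓ).neighborSet (x, i)).ncard = (G2.neighborSet i).ncard + 1 := by
  obtain ⟨j, hj⟩ := hsurj _ _ (hℓ.2 x i).symm
  have hN : (replacementProduct G1 G2 ℓ).neighborSet (x, i) =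
      insert (ℓ x i, j) (Prod.mk x '' G2.neighborSet i) := by
    ext ⟨y, k⟩
    simp only [mem_neighborSet, Set.mem_insert_iff, Set.mem_image, Prod.mk.injEq]
    constructor
    · rintro (⟨rfl, h⟩ | ⟨-, rfl, h⟩)
      · exact Or.inr ⟨k, h, rfl, rfl⟩
      · exact Or.inl ⟨rfl, hℓ.1 _ (h.trans hj.symm)⟩
    · rintro (⟨rfl, rfl⟩ | ⟨k, h, rfl, rfl⟩)
      · exact Or.inr ⟨hℓ.2 x i, rfl, hj⟩
      · exact Or.inl ⟨rfl, h⟩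
  rw [hN, Set.ncard_insert_of_notMem, Set.ncard_image_of_injective _ (Prod.mk_right_injective x)]
  rintro ⟨k, -, hk⟩
  exact (hℓ.2 x i).ne (congrArg Prod.fst hk)

theorem ncard_cloudCut (F : Set (Sym2 (V1 × V2))) (x : V1) :
    (cloudCut F x).ncard = (F ∩ Set.range (Sym2.map (Prod.mk x))).ncard := by
  rw [cloudCut, ← Set.image_preimage_eq_inter_range,
    Set.ncard_image_of_injective _ (Sym2.map.injective (Prod.mk_right_injective x))]

theorem ncard_baseCut_le [Finite V1] [Finite V2] (F : Set (Sym2 (V1 × V2))) :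
    (baseCut G1 F).ncard ≤ F.ncard :=
  (Set.ncard_le_ncard Set.inter_subset_right).trans (Set.ncard_image_le (Set.toFinite _))

theorem ncard_cloudCut_add_ncard_baseCut_le [Finite V1] [Finite V2]
    (F : Set (Sym2 (V1 × V2))) (x : V1) :
    (cloudCut F x).ncard + (baseCut G1 F).ncard ≤ F.ncard := by
  have hsub : baseCut G1 F ⊆ Sym2.map Prod.fst '' (F \ Set.range (Sym2.map (Prod.mk x))) := by
    rintro _ ⟨he, e, heF, rfl⟩
    refine ⟨e, ⟨heF, ?_⟩, rfl⟩
    rintro ⟨e', rfl⟩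
    induction e' using Sym2.ind with
    | _ i j => simp at he
  have := (Set.ncard_le_ncard hsub).trans (Set.ncard_image_le (Set.toFinite _))
  have := Set.ncard_inter_add_ncard_sdiff_eq_ncard F (Set.range (Sym2.map (Prod.mk x)))
  rw [ncard_cloudCut]
  omega

theorem ncard_cloudCut_add_ncard_cloudCut_le [Finite V1] [Finite V2]
    (F : Set (Sym2 (V1 × V2))) {x y : V1} (hxy : x ≠ y) :
    (cloudCut F x).ncard + (cloudCut F y).ncard ≤ F.ncard := by
  have hsub : F ∩ Set.range (Sym2.map (Prod.mk y)) ⊆ F \ Set.range (Sym2.map (Prod.mk x)) := by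
    rintro _ ⟨heF, e, rfl⟩
    refine ⟨heF, ?_⟩
    rintro ⟨e', he'⟩
    induction e using Sym2.ind with
    | _ i j =>
      induction e' using Sym2.ind with
      | _ k m =>
        simp only [Sym2.map_mk, Sym2.eq_iff, Prod.mk.injEq] at he'
        exact hxy (by tauto)
  have := Set.ncard_le_ncard hsub
  have := Set.ncard_inter_add_ncard_sdiff_eq_ncard F (Set.range (Sym2.map (Prod.mk x)))
  rw [ncard_cloudCut, ncard_cloudCut]
  omega

theorem cloudCut_subset_edgeSet {F : Set (Sym2 (V1 × V2))}
    (hF : F ⊆ (replacementProduct G1 G2 ℓ).edgeSet) (x : V1) : cloudCut F x ⊆ G2.edgeSet := by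
  intro e he
  induction e using Sym2.ind with
  | _ i j =>
    have := hF he
    rw [Sym2.map_mk, mem_edgeSet] at this
    exact (this.resolve_right fun h => h.1.ne rfl).2

theorem reachable_mk_mk_of_reachable_cloudCut {F : Set (Sym2 (V1 × V2))} {x : V1} {i j : V2}
    (h : (G2.deleteEdges (cloudCut F x)).Reachable i j) :
    ((replacementProduct G1 G2 ℓ).deleteEdges F).Reachable (x, i) (x, j) :=
  h.lift (Prod.mk x) fun _ _ hij => by
    rw [deleteEdges_adj] at hij
    exact Adj.reachable (G := (replacementProduct G1 G2 ℓ).deleteEdges F)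
      (deleteEdges_adj.2 ⟨Or.inl ⟨rfl, hij.1⟩, hij.2⟩)

theorem reachable_of_adj_of_notMem_baseCut
    (hsurj : ∀ x y, G1.Adj x y → ∃ i, ℓ x i = y) {F : Set (Sym2 (V1 × V2))} {a b : V1}
    (hab : G1.Adj a b) (hB : s(a, b) ∉ baseCut G1 F)
    (ha : (G2.deleteEdges (cloudCut F a)).Preconnected)
    (hb : (G2.deleteEdges (cloudCut F b)).Preconnected) (i j : V2) :
    ((replacementProduct G1 G2 ℓ).deleteEdges F).Reachable (a, i) (b, j) := by
  obtain ⟨i', rfl⟩ := hsurj _ _ hab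
  obtain ⟨j', hj'⟩ := hsurj _ _ hab.symm
  have hcross : ((replacementProduct G1 G2 ℓ).deleteEdges F).Adj (a, i') (ℓ a i', j') :=
    deleteEdges_adj.2 ⟨Or.inr ⟨hab, rfl, hj'⟩, fun hF => hB ⟨hab, _, hF, rfl⟩⟩
  exact ((reachable_mk_mk_of_reachable_cloudCut (ha i i')).trans hcross.reachable).trans
    (reachable_mk_mk_of_reachable_cloudCut (hb j' j))

theorem preconnected_deleteEdges_of_preconnected
    (hsurj : ∀ x y, G1.Adj x y → ∃ i, ℓ x i = y) {F : Set (Sym2 (V1 × V2))}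
    (hB : (G1.deleteEdges (baseCut G1 F)).Preconnected)
    (hcl : ∀ x, (G2.deleteEdges (cloudCut F x)).Preconnected) :
    ((replacementProduct G1 G2 ℓ).deleteEdges F).Preconnected := by
  rintro ⟨a, i⟩ ⟨b, j⟩
  have hab := (hB a b).lift (·, j) fun x y hxy => reachable_of_adj_of_notMem_baseCut hsurj
    (deleteEdges_adj.1 hxy).1 (deleteEdges_adj.1 hxy).2 (hcl x) (hcl y) j j
  exact (reachable_mk_mk_of_reachable_cloudCut (hcl a i j)).trans hab

theorem replacementProduct_connected
    (hsurj : ∀ x y, G1.Adj x y → ∃ i, ℓ x i = y) (hc1 : G1.Connected) (hc2 : G2.Connected) :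
    (replacementProduct G1 G2 ℓ).Connected := by
  have hpre := preconnected_deleteEdges_of_preconnected hsurj (F := ∅)
    (by simpa [baseCut] using hc1.preconnected) fun x => by simpa [cloudCut] using hc2.preconnected
  have := hc1.nonempty
  have := hc2.nonempty
  exact (connected_iff _).2 ⟨by rwa [deleteEdges_empty] at hpre, inferInstance⟩

/-- If the component of `(x, i)` stayed inside the cloud of `x`, its edge-boundary, which lies
in `F`, would have at least `c (δ2 + 2 - c) ≥ 2 δ2` edges, where
`2 ≤ c ≤ |baseCut G1 F| < δ2` is its size. -/
theorem exists_reachable_fst_ne [Finite V1] [Finite V2] {δ2 : ℕ} (hℓ : IsRPLabelling G1 ℓ)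
    (hsurj : ∀ x y, G1.Adj x y → ∃ i, ℓ x i = y)
    (hr2 : ∀ i, (G2.neighborSet i).ncard = δ2) {F : Set (Sym2 (V1 × V2))}
    (hB : (baseCut G1 F).ncard < δ2) (hF : F.ncard < 2 * δ2)
    {x : V1} {i : V2} (hiso : ∃ w, ((replacementProduct G1 G2 ℓ).deleteEdges F).Adj (x, i) w) :
    ∃ q : V1 × V2, q.1 ≠ x ∧
      ((replacementProduct G1 G2 ℓ).deleteEdges F).Reachable (x, i) q := by
  by_contra! hX
  set X := {q | ((replacementProduct G1 G2 ℓ).deleteEdges F).Reachable (x, i) q}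
  have hXx : ∀ q ∈ X, q.1 = x := fun q hq => by_contra fun h => hX q h hq
  have hXF : edgeBoundary (replacementProduct G1 G2 ℓ) X ⊆ F :=
    edgeBoundary_setOf_reachable_subset F (x, i)
  have hX2 : 2 ≤ X.ncard := by
    obtain ⟨w, hw⟩ := hiso
    calc 2 = ({(x, i), w} : Set (V1 × V2)).ncard := (Set.ncard_pair hw.ne).symm
      _ ≤ X.ncard := Set.ncard_le_ncard (Set.pair_subset (Reachable.refl _) hw.reachable)
  have hXB : X.ncard ≤ (baseCut G1 F).ncard := by
    refine Set.ncard_le_ncard_of_injOn (fun q => s(x, ℓ x q.2)) ?_ ?_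
    · rintro ⟨y, k⟩ hq
      obtain rfl : y = x := hXx _ hq
      obtain ⟨j, hj⟩ := exists_replacementProduct_adj_label hℓ hsurj y k
      have hout : (ℓ y k, j) ∉ X := fun h => (hℓ.2 y k).ne (hXx _ h).symm
      exact ⟨hℓ.2 y k, _, hXF ⟨hj, _, hq, _, hout, rfl⟩, rfl⟩
    · rintro ⟨y, k⟩ hq ⟨y', k'⟩ hq' h
      obtain rfl := hXx _ hq
      obtain rfl := hXx _ hq'
      exact Prod.ext rfl (hℓ.1 _ (Sym2.congr_right.1 h))
  have hbd := ncard_mul_le_ncard_edgeBoundary (G := replacementProduct G1 G2 ℓ) (X := X)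
    (d := δ2 + 1) fun ⟨y, k⟩ _ => by rw [ncard_neighborSet_replacementProduct hℓ hsurj, hr2]
  have := Set.ncard_le_ncard hXF
  obtain ⟨c, hc⟩ : ∃ c, X.ncard = c + 2 := ⟨X.ncard - 2, by omega⟩
  obtain ⟨e, he⟩ : ∃ e, δ2 + 1 + 1 - X.ncard = e + 2 := ⟨δ2 - X.ncard, by omega⟩
  rw [he, hc] at hbd
  have hδ2 : δ2 = c + e + 2 := by omega
  nlinarith

theorem preconnected_deleteEdges_of_forall_ne_preconnected [Finite V1] [Finite V2] {δ2 : ℕ}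
    (hℓ : IsRPLabelling G1 ℓ) (hsurj : ∀ x y, G1.Adj x y → ∃ i, ℓ x i = y)
    (hr2 : ∀ i, (G2.neighborSet i).ncard = δ2) {F : Set (Sym2 (V1 × V2))}
    (hiso : ∀ p, ∃ q, ((replacementProduct G1 G2 ℓ).deleteEdges F).Adj p q)
    (hB : (baseCut G1 F).ncard < δ2) (hF : F.ncard < 2 * δ2) {x₀ : V1}
    (hB₀ : ((G1.deleteEdges (baseCut G1 F)).induce {x₀}ᶜ).Preconnected)
    (hcl : ∀ x ≠ x₀, (G2.deleteEdges (cloudCut F x)).Preconnected) :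
    ((replacementProduct G1 G2 ℓ).deleteEdges F).Preconnected := by
  have hout : ∀ p : V1 × V2, ∃ q : V1 × V2, q.1 ≠ x₀ ∧
      ((replacementProduct G1 G2 ℓ).deleteEdges F).Reachable p q := by
    rintro ⟨x, i⟩
    by_cases hx : x = x₀
    · subst hx
      exact exists_reachable_fst_ne hℓ hsurj hr2 hB hF (hiso _)
    · exact ⟨(x, i), hx, .refl _⟩
  have hmid : ∀ p q : V1 × V2, p.1 ≠ x₀ → q.1 ≠ x₀ →
      ((replacementProduct G1 G2 ℓ).deleteEdges F).Reachable p q := by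
    rintro ⟨a, i⟩ ⟨b, j⟩ ha hb
    have hab := (hB₀ ⟨a, ha⟩ ⟨b, hb⟩).lift (fun y : ({x₀}ᶜ : Set V1) => ((y : V1), j))
      fun y z hyz => by
        obtain ⟨hyz, hB⟩ := deleteEdges_adj.1 (comap_adj.1 hyz)
        exact reachable_of_adj_of_notMem_baseCut hsurj hyz hB (hcl _ y.2) (hcl _ z.2) j j
    exact (reachable_mk_mk_of_reachable_cloudCut (hcl a ha i j)).trans hab
  intro p q
  obtain ⟨p', hp', hpp'⟩ := hout p
  obtain ⟨q', hq', hqq'⟩ := hout q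
  exact (hpp'.trans (hmid p' q' hp' hq')).trans hqq'.symm

theorem min_edgeConn_le_ncard_of_isRestrictedEdgeCut [Finite V1] [Finite V2] [Nonempty V1]
    {δ2 : ℕ} (hℓ : IsRPLabelling G1 ℓ) (hsurj : ∀ x y, G1.Adj x y → ∃ i, ℓ x i = y)
    (hc2 : G2.Connected) (hr2 : ∀ i, (G2.neighborSet i).ncard = δ2)
    (hopt : LambdaPrimeOptimal G2) (hκ : vertexConn G1 = edgeConn G1)
    {F : Set (Sym2 (V1 × V2))} (hF : IsRestrictedEdgeCut (replacementProduct G1 G2 ℓ) F) :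
    min (edgeConn G1) (2 * δ2) ≤ F.ncard := by
  by_contra! hlt
  obtain ⟨hF_edgeConn, hF_two_mul⟩ := lt_min_iff.1 hlt
  obtain ⟨hFE, hdis, hiso⟩ := hF
  have : Nonempty V2 := hc2.nonempty
  have hcloud (x : V1) (h : ¬(G2.deleteEdges (cloudCut F x)).Connected) :
      δ2 ≤ (cloudCut F x).ncard :=
    le_ncard_of_not_connected_deleteEdges hc2 hr2 hopt (cloudCut_subset_edgeSet hFE x) h
  apply hdis
  refine (connected_iff _).2 ⟨?_, inferInstance⟩
  by_cases hgood : ∀ x, (G2.deleteEdges (cloudCut F x)).Connected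
  · refine preconnected_deleteEdges_of_preconnected hsurj ?_ fun x => (hgood x).preconnected
    by_contra hB
    have := edgeConn_le_ncard (F := baseCut G1 F) Set.inter_subset_left fun h => hB h.preconnected
    have := ncard_baseCut_le (G1 := G1) F
    omega
  push Not at hgood
  obtain ⟨x₀, hx₀⟩ := hgood
  have := hcloud x₀ hx₀
  have := ncard_cloudCut_add_ncard_baseCut_le (G1 := G1) F x₀
  obtain ⟨i₀⟩ := ‹Nonempty V2›
  have hdeg (x : V1) : δ2 < (G1.neighborSet x).ncard := by
    rw [← hr2 i₀]
    exact (ncard_neighborSet_lt_nat_card i₀).trans_le (hℓ.nat_card_le_ncard_neighborSet x)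
  have hB₀ : ((G1.deleteEdges (baseCut G1 F)).induce {x₀}ᶜ).Connected := by
    have hne : ({x₀}ᶜ : Set V1).Nonempty := ⟨ℓ x₀ i₀, (hℓ.2 x₀ i₀).ne'⟩
    refine connected_induce_compl_deleteEdges hne ?_ fun x => ?_ <;> rw [Set.ncard_singleton]
    · rw [hκ]
      omega
    · have := hdeg x
      omega
  have hcl (x : V1) (hx : x ≠ x₀) : (G2.deleteEdges (cloudCut F x)).Preconnected := by
    by_contra hbad
    have := hcloud x fun h => hbad h.preconnected
    have := ncard_cloudCut_add_ncard_cloudCut_le F hx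
    omega
  exact preconnected_deleteEdges_of_forall_ne_preconnected hℓ hsurj hr2 hiso (by omega)
    hF_two_mul hB₀.preconnected hcl

theorem ncard_edgeBoundary_preimage_fst_le [Finite V1] (hℓ : IsRPLabelling G1 ℓ)
    (X : Set V1) :
    (edgeBoundary (replacementProduct G1 G2 ℓ) (Prod.fst ⁻¹' X)).ncard ≤
      (edgeBoundary G1 X).ncard := by
  have hcross {p q : V1 × V2} (hp : p.1 ∈ X) (hq : q.1 ∉ X)
      (h : (replacementProduct G1 G2 ℓ).Adj p q) :
      G1.Adj p.1 q.1 ∧ ℓ p.1 p.2 = q.1 ∧ ℓ q.1 q.2 = p.1 :=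
    replacementProduct_adj_of_fst_ne h (ne_of_mem_of_not_mem hp hq)
  refine Set.ncard_le_ncard_of_injOn (Sym2.map Prod.fst) ?_ ?_
  · rintro _ ⟨he, p, hp, q, hq, rfl⟩
    exact ⟨(hcross hp hq he).1, p.1, hp, q.1, hq, rfl⟩
  · rintro _ ⟨he, ⟨a, i⟩, hp, ⟨b, j⟩, hq, rfl⟩
      _ ⟨he', ⟨a', i'⟩, hp', ⟨b', j'⟩, hq', rfl⟩ h
    simp only [Sym2.map_mk, Sym2.eq_iff] at h
    rcases h with ⟨rfl, rfl⟩ | ⟨rfl, -⟩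
    · obtain ⟨-, hi, hj⟩ := hcross hp hq he
      obtain ⟨-, hi', hj'⟩ := hcross hp' hq' he'
      dsimp only at hi hj hi' hj'
      rw [hℓ.1 a (hi.trans hi'.symm), hℓ.1 b (hj.trans hj'.symm)]
    · exact absurd hp hq'

theorem exists_isRestrictedEdgeCut_ncard_le_edgeConn [Finite V1] [Nontrivial V1]
    [Nonempty V2] (hℓ : IsRPLabelling G1 ℓ) (hG2 : ∀ i, ∃ j, G2.Adj i j) :
    ∃ F, IsRestrictedEdgeCut (replacementProduct G1 G2 ℓ) F ∧ F.ncard ≤ edgeConn G1 := by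
  obtain ⟨X, ⟨a, ha, b, hb⟩, hX⟩ := exists_ncard_edgeBoundary_le_edgeConn (G := G1)
  obtain ⟨i⟩ := ‹Nonempty V2›
  refine ⟨_, isRestrictedEdgeCut_edgeBoundary (u := (a, i)) (v := (b, i)) ha hb ?_,
    (ncard_edgeBoundary_preimage_fst_le hℓ X).trans hX⟩
  rintro ⟨y, k⟩
  obtain ⟨m, hm⟩ := hG2 k
  exact ⟨(y, m), Or.inl ⟨rfl, hm⟩, Iff.rfl⟩

theorem exists_isRestrictedEdgeCut_ncard_le_two_mul [Finite V1] [Finite V2] [Nonempty V1]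
    {δ2 : ℕ} (hℓ : IsRPLabelling G1 ℓ) (hsurj : ∀ x y, G1.Adj x y → ∃ i, ℓ x i = y)
    (hr2 : ∀ i, (G2.neighborSet i).ncard = δ2) (hG2 : ∀ i, ∃ j, G2.Adj i j) {i₀ j₀ : V2}
    (hij : G2.Adj i₀ j₀) :
    ∃ F, IsRestrictedEdgeCut (replacementProduct G1 G2 ℓ) F ∧ F.ncard ≤ 2 * δ2 := by
  obtain ⟨x₀⟩ := ‹Nonempty V1›
  set X : Set (V1 × V2) := {(x₀, i₀), (x₀, j₀)}
  have hX : ∀ q ∈ X, q.1 = x₀ := by rintro _ (rfl | rfl) <;> rfl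
  have hout : (ℓ x₀ i₀, i₀) ∉ X := fun h => (hℓ.2 x₀ i₀).ne (hX _ h).symm
  refine ⟨edgeBoundary _ X, isRestrictedEdgeCut_edgeBoundary (Or.inl rfl) hout ?_, ?_⟩
  · rintro ⟨y, k⟩
    by_cases hyk : (y, k) ∈ X
    · simp only [X, Set.mem_insert_iff, Set.mem_singleton_iff, Prod.mk.injEq] at hyk
      rcases hyk with ⟨rfl, rfl⟩ | ⟨rfl, rfl⟩
      · exact ⟨(y, j₀), Or.inl ⟨rfl, hij⟩, iff_of_true (Or.inl rfl) (Or.inr rfl)⟩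
      · exact ⟨(y, i₀), Or.inl ⟨rfl, hij.symm⟩, iff_of_true (Or.inr rfl) (Or.inl rfl)⟩
    obtain ⟨z, hz, hzx₀⟩ :
        ∃ z, (replacementProduct G1 G2 ℓ).Adj (y, k) z ∧ z.1 ≠ x₀ := by
      by_cases hy : y = x₀
      · subst hy
        obtain ⟨j', hj'⟩ := exists_replacementProduct_adj_label hℓ hsurj y k
        exact ⟨_, hj', (hℓ.2 y k).ne'⟩
      · obtain ⟨m, hm⟩ := hG2 k
        exact ⟨(y, m), Or.inl ⟨rfl, hm⟩, hy⟩
    exact ⟨z, hz, iff_of_false hyk fun h => hzx₀ (hX z h)⟩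
  · show (edgeBoundary _ {(x₀, i₀), (x₀, j₀)}).ncard ≤ 2 * δ2
    have := ncard_edgeBoundary_pair_add_two_le (G := replacementProduct G1 G2 ℓ)
      (show (replacementProduct G1 G2 ℓ).Adj (x₀, i₀) (x₀, j₀) from Or.inl ⟨rfl, hij⟩)
    simp only [ncard_neighborSet_replacementProduct hℓ hsurj, hr2] at this
    omega

end ReplacementProduct

/-- Corollary 4.5. Let `G1` be a connected `δ1`-regular graph and `G2`
a connected `δ2`-regular graph on `δ1` vertices. If `κ(G1) = λ(G1)` and `G2` is
`λ'`-optimal, then `λ'(G1 ® G2) = min {λ(G1), 2·δ2}`. -/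
theorem restrictedEdgeConn_replacementProduct_eq_of_kappa_eq_lambda
    {V1 V2 : Type*} [Fintype V1] [Fintype V2] {δ1 δ2 : ℕ}
    (G1 : SimpleGraph V1) (G2 : SimpleGraph V2) (ℓ : V1 → V2 → V1)
    (hℓ : IsRPLabelling G1 ℓ)
    (hc1 : G1.Connected) (hc2 : G2.Connected)
    (hr1 : ∀ x : V1, (G1.neighborSet x).ncard = δ1)
    (hr2 : ∀ i : V2, (G2.neighborSet i).ncard = δ2)
    (hd : Fintype.card V2 = δ1)
    (hkleq : vertexConn G1 = edgeConn G1)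
    (hopt : LambdaPrimeOptimal G2) :
    restrictedEdgeConn (replacementProduct G1 G2 ℓ) = min (edgeConn G1) (2 * δ2) := by
  have hsurj : ∀ x y, G1.Adj x y → ∃ i, ℓ x i = y := fun _ _ => hℓ.exists_eq_of_adj hr1 hd
  obtain ⟨x₀⟩ := hc1.nonempty
  obtain ⟨i₀⟩ := hc2.nonempty
  rcases Nat.eq_zero_or_pos δ2 with rfl | hδ2
  · rw [Nat.mul_zero, Nat.min_zero]
    refine restrictedEdgeConn_eq_zero_of_ncard_neighborSet_le_one
      (replacementProduct_connected hsurj hc1 hc2) fun ⟨x, i⟩ => ?_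
    rw [ncard_neighborSet_replacementProduct hℓ hsurj, hr2]
  have hG2 (i : V2) : ∃ j, G2.Adj i j :=
    Set.nonempty_of_ncard_ne_zero (s := G2.neighborSet i) (by rw [hr2]; omega)
  obtain ⟨j₀, hij⟩ := hG2 i₀
  have : Nonempty V2 := ⟨i₀⟩
  have : Nontrivial V1 := ⟨⟨x₀, ℓ x₀ i₀, (hℓ.2 x₀ i₀).ne⟩⟩
  obtain ⟨F₁, hF₁, hF₁le⟩ := exists_isRestrictedEdgeCut_ncard_le_edgeConn hℓ hG2
  obtain ⟨F₂, hF₂, hF₂le⟩ :=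
    exists_isRestrictedEdgeCut_ncard_le_two_mul hℓ hsurj hr2 hG2 hij
  refine le_antisymm (le_min ((restrictedEdgeConn_le_ncard hF₁).trans hF₁le)
    ((restrictedEdgeConn_le_ncard hF₂).trans hF₂le)) (le_csInf ⟨_, F₂, hF₂, rfl⟩ ?_)
  rintro _ ⟨F, hF, rfl⟩
  exact min_edgeConn_le_ncard_of_isRestrictedEdgeCut hℓ hsurj hc2 hr2 hopt hkleq hF
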